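/- In a finite binary-action supermodular game where the least and greatest Nash equilibria coincide (call the unique equilibrium x*), the singleton {x*} is globally best-response stable: from every configuration there is a best-response path to x*, and no best-response path of positive length leaves x* (i.e., x* is a strict equilibrium). -/

import Mathlib

variable {V : Type*} [Fintype V] [DecidableEq V]

/-- A configuration assigns each player an action in `{-1, +1}` (as integers). -/
def Conf (x : V → ℤ) : Prop := ∀ i, x i = 1 ∨ x i = -1

/-- Supermodularity (increasing differences) for a binary-action game with
utilities `u`. -/
def Supermodular (u : V → (V → ℤ) → ℝ) : Prop :=
  ∀ (i : V) (x y : V → ℤ), Conf x → Conf y → (∀ j, j ≠ i → y j ≤ x j) →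
    u i (Function.update y i 1) - u i (Function.update y i (-1)) ≤
      u i (Function.update x i 1) - u i (Function.update x i (-1))

/-- One step of an improvement path: a single player flips her action and
strictly increases her utility. -/
def ImpStep (u : V → (V → ℤ) → ℝ) (x y : V → ℤ) : Prop :=
  ∃ i : V, y = Function.update x i (-(x i)) ∧ u i x < u i y

/-- A monotone improvement step (the active player switches from -1 to +1). -/
def MonStep (u : V → (V → ℤ) → ℝ) (x y : V → ℤ) : Prop :=
  ImpStep u x y ∧ x ≤ y

/-- An anti-monotone improvement step (the active player switches from +1 to -1). -/
def AntiStep (u : V → (V → ℤ) → ℝ) (x y : V → ℤ) : Prop :=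
  ImpStep u x y ∧ y ≤ x

/-- `y` is reachable from `x` by an improvement path. -/
def ImpReach (u : V → (V → ℤ) → ℝ) : (V → ℤ) → (V → ℤ) → Prop :=
  Relation.ReflTransGen (ImpStep u)

/-- `y` is reachable from `x` by a monotone improvement path. -/
def MonReach (u : V → (V → ℤ) → ℝ) : (V → ℤ) → (V → ℤ) → Prop :=
  Relation.ReflTransGen (MonStep u)

/-- `y` is reachable from `x` by an anti-monotone improvement path. -/
def AntiReach (u : V → (V → ℤ) → ℝ) : (V → ℤ) → (V → ℤ) → Prop :=
  Relation.ReflTransGen (AntiStep u)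

/-- `x` is a (pure strategy Nash) equilibrium: no unilateral flip strictly
improves the deviator's utility. -/
def IsNash (u : V → (V → ℤ) → ℝ) (x : V → ℤ) : Prop :=
  ∀ i : V, u i (Function.update x i (-(x i))) ≤ u i x

open Classical in
/-- `fplus u x` is the componentwise supremum of the set of configurations
reachable from `x` by monotone improvement paths. -/
noncomputable def fplus (u : V → (V → ℤ) → ℝ) (x : V → ℤ) : V → ℤ :=
  fun i => if ∃ y, MonReach u x y ∧ y i = 1 then 1 else -1

open Classical in
/-- `fminus u x` is the componentwise infimum of the set of configurations
reachable from `x` by anti-monotone improvement paths. -/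
noncomputable def fminus (u : V → (V → ℤ) → ℝ) (x : V → ℤ) : V → ℤ :=
  fun i => if ∃ y, AntiReach u x y ∧ y i = -1 then -1 else 1

/-- One step of a best response path: a single player flips her action without
decreasing her utility. -/
def BRStep (u : V → (V → ℤ) → ℝ) (x y : V → ℤ) : Prop :=
  ∃ i : V, y = Function.update x i (-(x i)) ∧ u i x ≤ u i y

/-- `y` is reachable from `x` by a best response path. -/
def BRReach (u : V → (V → ℤ) → ℝ) : (V → ℤ) → (V → ℤ) → Prop :=
  Relation.ReflTransGen (BRStep u)

/-! By increasing differences, strict upward improvements preserve "no player at `+1` gains by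
moving down", and in a finite game they cannot go on forever. So from a configuration stable
under downward deviations, upward improvements end at an equilibrium above it; dually, through
the game `negGame u` with the two actions swapped, downward improvements from a configuration
stable under upward deviations end at an equilibrium below it. From any configuration, climb
until no upward deviation pays, then descend: the equilibrium reached must be `x*`. If a player
were indifferent at `x*`, her deviation would lead to a configuration from which one of these
paths ends at an equilibrium on her new side of `x*`, a second equilibrium. -/

open Function

variable {u : V → (V → ℤ) → ℝ} {x y : V → ℤ}

def UpStable (u : V → (V → ℤ) → ℝ) (x : V → ℤ) : Prop :=
  ∀ i, x i = -1 → u i (update x i 1) ≤ u i x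

def DownStable (u : V → (V → ℤ) → ℝ) (x : V → ℤ) : Prop :=
  ∀ i, x i = 1 → u i (update x i (-1)) ≤ u i x

def IsStrictNash (u : V → (V → ℤ) → ℝ) (x : V → ℤ) : Prop :=
  ∀ i, u i (update x i (-(x i))) < u i x

def negGame (u : V → (V → ℤ) → ℝ) (i : V) (x : V → ℤ) : ℝ :=
  u i (-x)

omit [Fintype V] [DecidableEq V] in
theorem Conf.neg (hx : Conf x) : Conf (-x) := fun i => by
  rcases hx i with h | h <;> simp [h]

omit [Fintype V] in
theorem Conf.update_flip (hx : Conf x) (i : V) : Conf (update x i (-(x i))) := by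
  intro j
  rcases eq_or_ne j i with rfl | hji
  · rcases hx j with h | h <;> simp [h]
  · rw [update_of_ne hji]
    exact hx j

omit [Fintype V] in
theorem MonReach.conf (h : MonReach u x y) (hx : Conf x) : Conf y := by
  induction h with
  | refl => exact hx
  | tail _ hstep ih =>
    obtain ⟨⟨i, rfl, -⟩, -⟩ := hstep
    exact ih.update_flip i

omit [Fintype V] in
theorem MonReach.le (h : MonReach u x y) : x ≤ y := by
  induction h with
  | refl => exact le_rfl
  | tail _ hstep ih => exact ih.trans hstep.2

omit [Fintype V] in
theorem MonReach.brReach (h : MonReach u x y) : BRReach u x y :=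
  Relation.ReflTransGen.mono (fun _ _ ⟨⟨i, hi, hlt⟩, _⟩ => ⟨i, hi, hlt.le⟩) _ _ h

omit [DecidableEq V] in
theorem finite_setOf_conf : {x : V → ℤ | Conf x}.Finite :=
  (Set.Finite.pi fun _ => Set.toFinite {1, -1}).subset fun _ hx i _ => hx i

theorem exists_monReach_upStable (hx : Conf x) : ∃ z, MonReach u x z ∧ UpStable u z := by
  have hfin : {z | MonReach u x z}.Finite :=
    finite_setOf_conf.subset fun _ hz => MonReach.conf hz hx
  obtain ⟨z, hxz, hmax⟩ := hfin.exists_maximal ⟨x, .refl⟩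
  refine ⟨z, hxz, fun i hzi => not_lt.1 fun hlt => ?_⟩
  have hup : z ≤ update z i 1 := le_update_iff.2 ⟨by rw [hzi]; norm_num, fun _ _ => le_rfl⟩
  have hstep : MonStep u z (update z i 1) := ⟨⟨i, by rw [hzi, neg_neg], hlt⟩, hup⟩
  have hzi' := hmax (hxz.tail hstep) hup i
  simp [hzi] at hzi'

omit [Fintype V] in
theorem Supermodular.utility_down_le_of_le (hsm : Supermodular u) (hx : Conf x) (hy : Conf y)
    (hxy : x ≤ y) {i : V} (hxi : x i = 1) (h : u i (update x i (-1)) ≤ u i x) :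
    u i (update y i (-1)) ≤ u i y := by
  have hyi : y i = 1 := (hy i).resolve_right fun h' => by
    have hle := hxy i
    rw [hxi, h'] at hle
    norm_num at hle
  have hdiff := hsm i y x hy hx fun j _ => hxy j
  rw [(update_eq_self_iff (f := x)).2 hxi.symm, (update_eq_self_iff (f := y)).2 hyi.symm] at hdiff
  linarith

omit [Fintype V] in
theorem DownStable.monStep (hsm : Supermodular u) (hx : Conf x) (h : DownStable u x)
    (hxy : MonStep u x y) : DownStable u y := by
  obtain ⟨⟨i, rfl, hlt⟩, hle⟩ := hxy
  intro j hj
  rcases eq_or_ne j i with rfl | hji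
  · have hxj : x j = -1 := by simp only [update_self] at hj; omega
    rw [update_idem, ← hxj, update_eq_self]
    exact hlt.le
  · have hxj : x j = 1 := by rwa [update_of_ne hji] at hj
    exact hsm.utility_down_le_of_le hx (hx.update_flip i) hle hxj (h j hxj)

omit [Fintype V] in
theorem DownStable.monReach (hsm : Supermodular u) (hx : Conf x) (h : DownStable u x)
    (hxy : MonReach u x y) : DownStable u y := by
  induction hxy with
  | refl => exact h
  | tail hxy hstep ih => exact ih.monStep hsm (MonReach.conf hxy hx) hstep

omit [Fintype V] in
theorem isNash_of_upStable_of_downStable (hx : Conf x) (hup : UpStable u x)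
    (hdown : DownStable u x) : IsNash u x := by
  intro i
  rcases hx i with h | h
  · rw [h]
    exact hdown i h
  · rw [h, neg_neg]
    exact hup i h

theorem exists_nash_above (hsm : Supermodular u) (hx : Conf x) (h : DownStable u x) :
    ∃ z, Conf z ∧ IsNash u z ∧ x ≤ z ∧ BRReach u x z := by
  obtain ⟨z, hxz, hup⟩ := exists_monReach_upStable (u := u) hx
  have hz := hxz.conf hx
  exact ⟨z, hz, isNash_of_upStable_of_downStable hz hup (h.monReach hsm hx hxz), hxz.le,
    hxz.brReach⟩

omit [Fintype V] in
theorem Supermodular.negGame (hsm : Supermodular u) : Supermodular (negGame u) := by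
  intro i x y hx hy hxy
  have hdiff := hsm i (-y) (-x) hy.neg hx.neg fun j hj => neg_le_neg (hxy j hj)
  simp only [_root_.negGame, ← update_neg, neg_neg]
  linarith

omit [Fintype V] in
theorem UpStable.downStable_negGame (h : UpStable u x) : DownStable (negGame u) (-x) := by
  intro i hi
  have hxi : x i = -1 := by simpa [neg_eq_iff_eq_neg] using hi
  simpa [negGame, update_neg] using h i hxi

omit [Fintype V] in
theorem isNash_negGame_iff : IsNash (negGame u) x ↔ IsNash u (-x) := by
  simp only [IsNash, negGame, ← update_neg, Pi.neg_apply, neg_neg]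

omit [Fintype V] in
theorem BRReach.of_negGame (h : BRReach (negGame u) x y) : BRReach u (-x) (-y) := by
  induction h with
  | refl => exact .refl
  | tail _ hstep ih =>
    obtain ⟨i, rfl, hle⟩ := hstep
    refine ih.tail ⟨i, ?_, ?_⟩
    · simp only [← update_neg, Pi.neg_apply, neg_neg]
    · simpa [negGame] using hle

theorem exists_nash_below (hsm : Supermodular u) (hx : Conf x) (h : UpStable u x) :
    ∃ z, Conf z ∧ IsNash u z ∧ z ≤ x ∧ BRReach u x z := by
  obtain ⟨z, hz, hnash, hle, hreach⟩ :=
    exists_nash_above hsm.negGame hx.neg h.downStable_negGame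
  exact ⟨-z, hz.neg, isNash_negGame_iff.1 hnash, neg_le.1 hle, by simpa using hreach.of_negGame⟩

theorem exists_brReach_nash (hsm : Supermodular u) (hx : Conf x) :
    ∃ z, Conf z ∧ IsNash u z ∧ BRReach u x z := by
  obtain ⟨y, hxy, hup⟩ := exists_monReach_upStable (u := u) hx
  obtain ⟨z, hz, hnash, -, hyz⟩ := exists_nash_below hsm (hxy.conf hx) hup
  exact ⟨z, hz, hnash, hxy.brReach.trans hyz⟩

omit [Fintype V] in
theorem IsStrictNash.eq_of_brReach (h : IsStrictNash u x) (hxy : BRReach u x y) : y = x := by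
  rcases hxy.cases_head with rfl | ⟨_, ⟨i, rfl, hle⟩, -⟩
  · rfl
  · exact absurd hle (h i).not_ge

theorem IsNash.lt_of_unique_of_eq_neg_one (hnash : IsNash u x) (hsm : Supermodular u)
    (hx : Conf x) (huniq : ∀ z, Conf z → IsNash u z → z = x) {i : V} (hi : x i = -1) :
    u i (update x i (-(x i))) < u i x := by
  rw [hi, neg_neg]
  refine (by simpa [hi] using hnash i : u i (update x i 1) ≤ u i x).lt_of_ne fun heq => ?_
  set y := update x i 1
  have hy : Conf y := by simpa [hi] using hx.update_flip i
  have hxy : x ≤ y := le_update_iff.2 ⟨by rw [hi]; norm_num, fun _ _ => le_rfl⟩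
  have hdown : DownStable u y := by
    intro j hj
    rcases eq_or_ne j i with rfl | hji
    · rw [update_idem, ← hi, update_eq_self, heq]
    · have hxj : x j = 1 := by simpa [y, hji] using hj
      exact hsm.utility_down_le_of_le hx hy hxy hxj (by simpa [hxj] using hnash j)
  obtain ⟨z, hz, hzN, hyz, -⟩ := exists_nash_above hsm hy hdown
  have hzi := hyz i
  rw [huniq z hz hzN] at hzi
  simp [y, hi] at hzi

theorem IsNash.isStrictNash_of_unique (hnash : IsNash u x) (hsm : Supermodular u) (hx : Conf x)
    (huniq : ∀ z, Conf z → IsNash u z → z = x) : IsStrictNash u x := by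
  intro i
  rcases hx i with hi | hi
  · have huniq' : ∀ z, Conf z → IsNash (negGame u) z → z = -x := fun z hz hzN =>
      neg_eq_iff_eq_neg.1 (huniq _ hz.neg (isNash_negGame_iff.1 hzN))
    have hlt := (isNash_negGame_iff.2 (by simpa using hnash)).lt_of_unique_of_eq_neg_one
      hsm.negGame hx.neg huniq' (i := i) (by simp [hi])
    simpa [negGame, ← update_neg] using hlt
  · exact hnash.lt_of_unique_of_eq_neg_one hsm hx huniq hi

theorem unique_nash_globally_BR_stable_general (u : V → (V → ℤ) → ℝ)
    (hsm : Supermodular u) (xs : V → ℤ)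
    (huniq : ∀ x : V → ℤ, Conf x → IsNash u x → x = xs) :
    (∀ x : V → ℤ, Conf x → BRReach u x xs) ∧
    (∀ y : V → ℤ, BRReach u xs y → y = xs) ∧
    (∀ i : V, u i (Function.update xs i (-(xs i))) < u i xs) := by
  have hreach : ∀ x, Conf x → BRReach u x xs := fun x hx => by
    obtain ⟨z, hz, hzN, hxz⟩ := exists_brReach_nash hsm hx
    rwa [huniq z hz hzN] at hxz
  obtain ⟨z, hz, hzN, -⟩ := exists_brReach_nash (u := u) (x := 1) hsm fun _ => .inl rfl
  obtain rfl := huniq z hz hzN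
  have hstrict : IsStrictNash u z := hzN.isStrictNash_of_unique hsm hz huniq
  exact ⟨hreach, fun _ => hstrict.eq_of_brReach, hstrict⟩

/-- if the supermodular game has a unique Nash equilibrium `x*`
(least and greatest equilibria coincide), then `{x*}` is globally best-response
stable and `x*` is a strict equilibrium. -/
theorem unique_nash_globally_BR_stable (u : V → (V → ℤ) → ℝ)
    (hsm : Supermodular u) (xs : V → ℤ) (hxs : Conf xs)
    (hnash : IsNash u xs)
    (huniq : ∀ x : V → ℤ, Conf x → IsNash u x → x = xs) :
    (∀ x : V → ℤ, Conf x → BRReach u x xs) ∧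
    (∀ y : V → ℤ, BRReach u xs y → y = xs) ∧
    (∀ i : V, u i (Function.update xs i (-(xs i))) < u i xs) :=
  unique_nash_globally_BR_stable_general u hsm xs huniq
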